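/- arXiv:2110.14295 — 2 statements merged into one kernel-verified Lean document; each statement's English description precedes it below -/
import Mathlib

section
/- (Lex-monotonicity) Define the basis B^π of a policy π as the family of functions (B^π)_k : X_k → ℝ given by (B^π)_k(x) = Q^π_k(x, π_k(x)). Define B^{π'} >_lex B^π iff, letting k* be the largest index with (B^{π'})_{k*} ≠ (B^π)_{k*}, one has (B^{π'})_{k*}(x) ≥ (B^π)_{k*}(x) for all x with strict inequality for some x. Suppose π ≠ π', the weak improvement condition Q^{π'}_k(x, π'_k(x)) ≥ Q^{π'}_k(x, π_k(x)) holds for all k and x, and the consistent tie-break property holds. Then B^{π'} >_lex B^π. -/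
/-- Lexicographic order on policy bases: `B' >_lex B` iff there is a largest index
`k* < T` at which the families disagree, and at that index `B'_{k*}(x) ≥ B_{k*}(x)` for
all `x` with strict inequality for some `x`. -/
def LexGt (T : ℕ) {X : ℕ → Type*} (B' B : ∀ k, X k → ℝ) : Prop :=
  ∃ kstar, kstar < T ∧ (∀ k, kstar < k → k < T → B' k = B k) ∧
    (∀ x : X kstar, B kstar x ≤ B' kstar x) ∧ (∃ x : X kstar, B kstar x < B' kstar x)

/-- Lex-monotonicity: with the basis `(B^π)_k(x) = Q^π_k(x, π_k(x))`,
if `π ≠ π'`, the weak improvement condition `Q^{π'}_k(x, π'_k(x)) ≥ Q^{π'}_k(x, π_k(x))`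
holds for all `k, x`, and the consistent tie-break property holds, then
`B^{π'} >_lex B^π`. -/
theorem lex_monotonicity (T : ℕ) {X : ℕ → Type*} {U : ℕ → Type*}
    (Q : (∀ t, X t → U t) → (k : ℕ) → X k → U k → ℝ)
    (hQ : ∀ (k : ℕ) (π₁ π₂ : ∀ t, X t → U t),
      (∀ t, k < t → t < T → π₁ t = π₂ t) → ∀ (x : X k) (u : U k), Q π₁ k x u = Q π₂ k x u)
    (π π' : ∀ t, X t → U t)
    (hne : ∃ k, k < T ∧ ∃ x : X k, π k x ≠ π' k x)
    (himp : ∀ k, k < T → ∀ x : X k, Q π' k x (π k x) ≤ Q π' k x (π' k x))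
    (htie : ∀ k, k < T → ∀ x : X k,
      Q π' k x (π' k x) = Q π' k x (π k x) → π' k x = π k x) :
    LexGt T (fun k x => Q π' k x (π' k x)) (fun k x => Q π k x (π k x)) := by
  classical
  obtain ⟨k0, hk0T, hx0⟩ := hne
  set P : ℕ → Prop := fun k => k < T ∧ ∃ x : X k, π k x ≠ π' k x with hP
  have hPk0 : P k0 := ⟨hk0T, hx0⟩
  set kstar := Nat.findGreatest P T with hks
  have hPks : P kstar := Nat.findGreatest_spec (le_of_lt hk0T) hPk0
  obtain ⟨hksT, xne, hxne⟩ := hPks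
  have hagree : ∀ t, kstar < t → t < T → π t = π' t := by
    intro t ht htT
    have hnot : ¬ P t := Nat.findGreatest_is_greatest ht (le_of_lt htT)
    funext x
    by_contra hc
    exact hnot ⟨htT, x, hc⟩
  refine ⟨kstar, hksT, ?_, ?_, ?_⟩
  · intro k hk hkT
    funext x
    have hag : ∀ t, k < t → t < T → π' t = π t := fun t ht htT =>
      (hagree t (lt_trans hk ht) htT).symm
    have h1 : Q π' k x (π' k x) = Q π k x (π' k x) := hQ k π' π hag x _
    have h2 : π' k x = π k x := by rw [hagree k hk hkT]
    show Q π' k x (π' k x) = Q π k x (π k x)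
    rw [h1, h2]
  · intro x
    have h1 : Q π kstar x (π kstar x) = Q π' kstar x (π kstar x) :=
      hQ kstar π π' hagree x _
    show Q π kstar x (π kstar x) ≤ Q π' kstar x (π' kstar x)
    rw [h1]
    exact himp kstar hksT x
  · refine ⟨xne, ?_⟩
    have h1 : Q π kstar xne (π kstar xne) = Q π' kstar xne (π kstar xne) :=
      hQ kstar π π' hagree xne _
    show Q π kstar xne (π kstar xne) < Q π' kstar xne (π' kstar xne)
    rw [h1]
    rcases lt_or_eq_of_le (himp kstar hksT xne) with h | h
    · exact h
    · exact absurd (htie kstar hksT xne h.symm) (Ne.symm hxne)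
end

section
/- (Extended Bellman Q-recursion for a mean-variance-type criterion) For the controlled Markov chain with value V^π_t(x) = E_{t,x}[F(X^π_T)] + G(E_{t,x}[X^π_T]) and Q^π_t(x,u) = V^{u⊕_tπ}_t(x) (act u at time t, then follow π), with f^π_t(x,u) = E_{t,x}[F(X^{u⊕_tπ}_T)] and g^π_t(x,u) = E_{t,x}[X^{u⊕_tπ}_T], the following holds for t < T−1: Q^π_t(x,u) = E_{t,x}[ Q^π_{t+1}(X^u_{t+1}, π_{t+1}(X^u_{t+1})) ] − ( E_{t,x}[ G(g^π_{t+1}(X^u_{t+1}, π_{t+1}(X^u_{t+1}))) ] − G(g^π_t(x,u)) ), and Q^π_{T−1}(x,u) = f^π_{T−1}(x,u) + G(g^π_{T−1}(x,u)). -/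
open Finset

/-- `distN p π t x u n y`: probability that the controlled Markov chain is in state `y`
at time `t + 1 + n`, given `X_t = x`, first action `u`, and actions prescribed by `π`
at later times. -/
def distN {S A : Type*} [Fintype S] (p : ℕ → S → A → S → ℝ) (π : ℕ → S → A)
    (t : ℕ) (x : S) (u : A) : ℕ → S → ℝ
  | 0 => p t x u
  | n + 1 => fun y =>
      ∑ z : S, distN p π t x u n z * p (t + 1 + n) z (π (t + 1 + n) z) y

/-- `f^π_t(x,u) = E_{t,x}[F(X_T^{u⊕_tπ})]`, with real-valued states given by `val`. -/
def advF {S A : Type*} [Fintype S] (T : ℕ) (p : ℕ → S → A → S → ℝ) (π : ℕ → S → A)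
    (val : S → ℝ) (F : ℝ → ℝ) (t : ℕ) (x : S) (u : A) : ℝ :=
  ∑ y : S, distN p π t x u (T - 1 - t) y * F (val y)

/-- `g^π_t(x,u) = E_{t,x}[X_T^{u⊕_tπ}]`. -/
def advG {S A : Type*} [Fintype S] (T : ℕ) (p : ℕ → S → A → S → ℝ) (π : ℕ → S → A)
    (val : S → ℝ) (t : ℕ) (x : S) (u : A) : ℝ :=
  ∑ y : S, distN p π t x u (T - 1 - t) y * val y

/-- `Q^π_t(x,u) = V^{u⊕_tπ}_t(x) = E_{t,x}[F(X_T)] + G(E_{t,x}[X_T])` (act `u` at time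
`t`, then follow `π`). -/
def advQ {S A : Type*} [Fintype S] (T : ℕ) (p : ℕ → S → A → S → ℝ) (π : ℕ → S → A)
    (val : S → ℝ) (F G : ℝ → ℝ) (t : ℕ) (x : S) (u : A) : ℝ :=
  advF T p π val F t x u + G (advG T p π val t x u)


lemma distN_shift {S A : Type*} [Fintype S] (p : ℕ → S → A → S → ℝ) (π : ℕ → S → A)
    (t : ℕ) (x : S) (u : A) : ∀ (n : ℕ) (y : S),
    distN p π t x u (n + 1) y =
      ∑ x' : S, p t x u x' * distN p π (t + 1) x' (π (t + 1) x') n y := by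
  intro n
  induction n with
  | zero => intro y; simp [distN]
  | succ n ih =>
      intro y
      have : distN p π t x u (n + 1 + 1) y =
          ∑ z : S, distN p π t x u (n + 1) z * p (t + 1 + (n + 1)) z (π (t + 1 + (n + 1)) z) y := rfl
      rw [this]
      simp only [ih, Finset.sum_mul]
      rw [Finset.sum_comm]
      refine Finset.sum_congr rfl fun x' _ => ?_
      have : distN p π (t + 1) x' (π (t + 1) x') (n + 1) y =
          ∑ z : S, distN p π (t + 1) x' (π (t + 1) x') n z *
            p (t + 1 + 1 + n) z (π (t + 1 + 1 + n) z) y := rfl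
      rw [this, Finset.mul_sum]
      refine Finset.sum_congr rfl fun z _ => ?_
      have h : t + 1 + (n + 1) = t + 1 + 1 + n := by ring
      rw [h]; ring

lemma advF_step {S A : Type*} [Fintype S] (T : ℕ) (p : ℕ → S → A → S → ℝ)
    (π : ℕ → S → A) (val : S → ℝ) (F : ℝ → ℝ) (t : ℕ) (ht : t + 1 < T) (x : S) (u : A) :
    advF T p π val F t x u =
      ∑ x' : S, p t x u x' * advF T p π val F (t + 1) x' (π (t + 1) x') := by
  have h : T - 1 - t = (T - 1 - (t + 1)) + 1 := by omega
  unfold advF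
  rw [h]
  simp only [distN_shift, Finset.sum_mul]
  rw [Finset.sum_comm]
  refine Finset.sum_congr rfl fun x' _ => ?_
  rw [Finset.mul_sum]
  exact Finset.sum_congr rfl fun y _ => by ring

lemma advG_step {S A : Type*} [Fintype S] (T : ℕ) (p : ℕ → S → A → S → ℝ)
    (π : ℕ → S → A) (val : S → ℝ) (t : ℕ) (ht : t + 1 < T) (x : S) (u : A) :
    advG T p π val t x u =
      ∑ x' : S, p t x u x' * advG T p π val (t + 1) x' (π (t + 1) x') := by
  have h : T - 1 - t = (T - 1 - (t + 1)) + 1 := by omega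
  unfold advG
  rw [h]
  simp only [distN_shift, Finset.sum_mul]
  rw [Finset.sum_comm]
  refine Finset.sum_congr rfl fun x' _ => ?_
  rw [Finset.mul_sum]
  exact Finset.sum_congr rfl fun y _ => by ring

/-- Extended Bellman Q-recursion for a mean-variance-type criterion:
for `t < T − 1`,
`Q^π_t(x,u) = E_{t,x}[Q^π_{t+1}(X_{t+1}, π_{t+1}(X_{t+1}))] −
  (E_{t,x}[G(g^π_{t+1}(X_{t+1}, π_{t+1}(X_{t+1})))] − G(g^π_t(x,u)))`,
and `Q^π_{T−1}(x,u) = f^π_{T−1}(x,u) + G(g^π_{T−1}(x,u))`. -/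
theorem extended_bellman_Q_recursion {S A : Type*} [Fintype S]
    (T : ℕ) (hT : 0 < T)
    (p : ℕ → S → A → S → ℝ)
    (hp0 : ∀ t x u y, 0 ≤ p t x u y)
    (hp1 : ∀ t x u, ∑ y : S, p t x u y = 1)
    (π : ℕ → S → A) (val : S → ℝ) (F G : ℝ → ℝ) :
    (∀ t, t + 1 < T → ∀ (x : S) (u : A),
      advQ T p π val F G t x u =
        (∑ x' : S, p t x u x' * advQ T p π val F G (t + 1) x' (π (t + 1) x')) -
          ((∑ x' : S, p t x u x' * G (advG T p π val (t + 1) x' (π (t + 1) x'))) -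
            G (advG T p π val t x u))) ∧
    (∀ (x : S) (u : A),
      advQ T p π val F G (T - 1) x u =
        advF T p π val F (T - 1) x u + G (advG T p π val (T - 1) x u)) := by
  constructor
  · intro t ht x u
    unfold advQ
    rw [advF_step T p π val F t ht x u]
    simp only [mul_add, Finset.sum_add_distrib]
    ring
  · intro x u
    rfl
end
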